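/- arXiv:1903.09181 — 2 statements merged into one kernel-verified Lean document; each statement's English description precedes it below -/
import Mathlib

section
/- Let X be a proper metric space (closed bounded sets are compact) and let u : X → ℝ be a continuous function with u ≥ 0. Let y₀ ∈ X be such that P₀ := u(y₀) > 0, and let A₀ > 0. Then there exists x₀ ∈ X with dist(x₀, y₀) < 2·A₀·P₀^(−1/2), such that Q₀ := u(x₀) ≥ P₀ and u(x) ≤ 4·Q₀ for every x ∈ X with dist(x, x₀) < A₀·Q₀^(−1/2). -/
/-!
Among the points `x` with `u x ≥ P₀` that lie within `2 A₀ (P₀^(-1/2) - u(x)^(-1/2))` of `y₀`,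
pick `x₀` with `u x₀` larger than a quarter of the supremum of `u` over them; this supremum is
finite because all these points lie in the compact ball of radius `2 A₀ P₀^(-1/2)` about `y₀`.
A point `x` within `A₀ u(x₀)^(-1/2)` of `x₀` with `u x > 4 u x₀` would satisfy
`u(x)^(-1/2) < u(x₀)^(-1/2) / 2`, so by the triangle inequality it would again be such a point,
contradicting the choice of `x₀`.
-/

open Metric

lemma Set.exists_forall_le_mul_of_bddAbove_image {α : Type*} {S : Set α} {f : α → ℝ} {a : α}
    (ha : a ∈ S) (hfa : 0 < f a) (hbdd : BddAbove (f '' S)) {c : ℝ} (hc : 1 < c) :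
    ∃ x₀ ∈ S, ∀ x ∈ S, f x ≤ c * f x₀ := by
  have hsup_pos : 0 < sSup (f '' S) := hfa.trans_le (le_csSup hbdd ⟨a, ha, rfl⟩)
  have hlt : sSup (f '' S) / c < sSup (f '' S) := div_lt_self hsup_pos hc
  obtain ⟨_, ⟨x₀, hx₀, rfl⟩, hx₀_gt⟩ := exists_lt_of_lt_csSup (Set.image_nonempty.2 ⟨a, ha⟩) hlt
  rw [div_lt_iff₀' (zero_lt_one.trans hc)] at hx₀_gt
  exact ⟨x₀, hx₀, fun x hx => (le_csSup hbdd ⟨x, hx, rfl⟩).trans hx₀_gt.le⟩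

lemma Real.four_mul_rpow_neg_half {q : ℝ} (hq : 0 ≤ q) :
    (4 * q) ^ (-(1 / 2 : ℝ)) = q ^ (-(1 / 2 : ℝ)) / 2 := by
  have h4 : (4 : ℝ) ^ (-(1 / 2 : ℝ)) = 1 / 2 := by
    rw [show (4 : ℝ) = 2 ^ (2 : ℝ) by norm_num, ← Real.rpow_mul (by norm_num)]
    norm_num
  rw [Real.mul_rpow (by norm_num) hq, h4]
  ring

section PointSelection

variable {X : Type*} [PseudoMetricSpace X] (u : X → ℝ) (y₀ : X) (A₀ : ℝ)

def pointSelectionSet : Set X :=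
  {x | u y₀ ≤ u x ∧ dist x y₀ ≤ 2 * A₀ * (u y₀ ^ (-(1 / 2 : ℝ)) - u x ^ (-(1 / 2 : ℝ)))}

variable {u y₀ A₀}

lemma mem_pointSelectionSet_self : y₀ ∈ pointSelectionSet u y₀ A₀ := by
  simp [pointSelectionSet]

lemma pointSelectionSet_subset_closedBall (hP₀ : 0 ≤ u y₀) (hA₀ : 0 ≤ A₀) :
    pointSelectionSet u y₀ A₀ ⊆ closedBall y₀ (2 * A₀ * u y₀ ^ (-(1 / 2 : ℝ))) := by
  intro x ⟨hux, hdist⟩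
  have : 0 ≤ u x ^ (-(1 / 2 : ℝ)) := Real.rpow_nonneg (hP₀.trans hux) _
  rw [mem_closedBall]
  nlinarith

lemma dist_lt_of_mem_pointSelectionSet (hP₀ : 0 < u y₀) (hA₀ : 0 < A₀) {x : X}
    (hx : x ∈ pointSelectionSet u y₀ A₀) :
    dist x y₀ < 2 * A₀ * u y₀ ^ (-(1 / 2 : ℝ)) := by
  have : 0 < u x ^ (-(1 / 2 : ℝ)) := Real.rpow_pos_of_pos (hP₀.trans_le hx.1) _
  nlinarith [hx.2]

lemma mem_pointSelectionSet_of_dist_lt (hP₀ : 0 < u y₀) {x₀ x : X}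
    (hx₀ : x₀ ∈ pointSelectionSet u y₀ A₀) (hdist : dist x x₀ < A₀ * u x₀ ^ (-(1 / 2 : ℝ)))
    (hux : 4 * u x₀ < u x) : x ∈ pointSelectionSet u y₀ A₀ := by
  have hux₀ : 0 < u x₀ := hP₀.trans_le hx₀.1
  have hscale : u x ^ (-(1 / 2 : ℝ)) ≤ u x₀ ^ (-(1 / 2 : ℝ)) / 2 := by
    rw [← Real.four_mul_rpow_neg_half hux₀.le]
    exact Real.rpow_le_rpow_of_nonpos (by positivity) hux.le (by norm_num)
  have hA₀ : 0 < A₀ :=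
    pos_of_mul_pos_left (dist_nonneg.trans_lt hdist) (Real.rpow_pos_of_pos hux₀ _).le
  refine ⟨by linarith [hx₀.1], ?_⟩
  nlinarith [dist_triangle x x₀ y₀, hx₀.2, mul_le_mul_of_nonneg_left hscale hA₀.le]

end PointSelection

theorem perelman_point_selection_general
    {X : Type*} [MetricSpace X] [ProperSpace X]
    (u : X → ℝ) (hu_cont : Continuous u)
    (y₀ : X) (hP₀ : 0 < u y₀) (A₀ : ℝ) (hA₀ : 0 < A₀) :
    ∃ x₀ : X, dist x₀ y₀ < 2 * A₀ * (u y₀) ^ (-(1/2 : ℝ)) ∧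
      u y₀ ≤ u x₀ ∧
      ∀ x : X, dist x x₀ < A₀ * (u x₀) ^ (-(1/2 : ℝ)) → u x ≤ 4 * u x₀ := by
  have hbdd : BddAbove (u '' pointSelectionSet u y₀ A₀) :=
    ((isCompact_closedBall _ _).bddAbove_image hu_cont.continuousOn).mono
      (Set.image_mono (pointSelectionSet_subset_closedBall hP₀.le hA₀.le))
  obtain ⟨x₀, hx₀, hmax⟩ := Set.exists_forall_le_mul_of_bddAbove_image
    mem_pointSelectionSet_self hP₀ hbdd (by norm_num : (1 : ℝ) < 4)
  refine ⟨x₀, dist_lt_of_mem_pointSelectionSet hP₀ hA₀ hx₀, hx₀.1, fun x hdist => ?_⟩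
  by_contra! hux
  exact (hmax x (mem_pointSelectionSet_of_dist_lt hP₀ hx₀ hdist hux)).not_gt hux

/-- Perelman's point selection lemma on a proper metric space:
given a continuous nonnegative function `u`, a point `y₀` with `u y₀ > 0`,
and `A₀ > 0`, there is a nearby point `x₀` with `u x₀ ≥ u y₀` such that
`u ≤ 4 * u x₀` on the ball of radius `A₀ * (u x₀)^(-1/2)` about `x₀`. -/
theorem perelman_point_selection
    {X : Type*} [MetricSpace X] [ProperSpace X]
    (u : X → ℝ) (hu_cont : Continuous u) (hu_nonneg : ∀ x, 0 ≤ u x)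
    (y₀ : X) (hP₀ : 0 < u y₀) (A₀ : ℝ) (hA₀ : 0 < A₀) :
    ∃ x₀ : X, dist x₀ y₀ < 2 * A₀ * (u y₀) ^ (-(1/2 : ℝ)) ∧
      u y₀ ≤ u x₀ ∧
      ∀ x : X, dist x x₀ < A₀ * (u x₀) ^ (-(1/2 : ℝ)) → u x ≤ 4 * u x₀ :=
  perelman_point_selection_general u hu_cont y₀ hP₀ A₀ hA₀
end

section
/- Let X be a proper metric space (closed bounded sets are compact) and let u : X → ℝ be a continuous function with u ≥ 0. Let (yᵢ) be a sequence in X with Pᵢ := u(yᵢ) → ∞ (and in particular Pᵢ > 0 for all large i). Then for each sufficiently large i there exists xᵢ ∈ X such that dist(xᵢ, yᵢ) < 2/3, Qᵢ := u(xᵢ) ≥ Pᵢ, and u(x) ≤ 4·Qᵢ for every x ∈ X with dist(x, xᵢ) < Aᵢ·Qᵢ^(−1/2), where Aᵢ := (1/3)·Pᵢ^(1/2) → ∞. Moreover Aᵢ·Qᵢ^(−1/2) ≤ 1/3, so that the ball of radius Aᵢ·Qᵢ^(−1/2) about xᵢ is contained in the unit ball about yᵢ. -/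
open Filter

private lemma point_select_aux {X : Type*} [MetricSpace X] [ProperSpace X]
    (u : X → ℝ) (hu_cont : Continuous u) (hu_nonneg : ∀ x, 0 ≤ u x)
    (y : X) (hPy : 0 < u y) :
    ∃ x : X, dist x y < 2/3 ∧ u y ≤ u x ∧
      (∀ z : X, dist z x < (1/3) * Real.sqrt (u y) / Real.sqrt (u x) → u z ≤ 4 * u x) := by
  set P := u y with hP
  set S : Set X := {x | P ≤ u x ∧ (2/3) * Real.sqrt P ≤ (2/3 - dist x y) * Real.sqrt (u x)}
    with hS
  have sP_pos : 0 < Real.sqrt P := Real.sqrt_pos.2 hPy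
  have hclosed : IsClosed S := by
    apply IsClosed.inter
    · exact isClosed_le continuous_const hu_cont
    · exact isClosed_le continuous_const
        ((continuous_const.sub (continuous_id.dist continuous_const)).mul
          (Real.continuous_sqrt.comp hu_cont))
  have hdist : ∀ x ∈ S, dist x y < 2/3 := by
    intro x hx
    by_contra h
    push_neg at h
    have h1 : (2/3 - dist x y) * Real.sqrt (u x) ≤ 0 :=
      mul_nonpos_of_nonpos_of_nonneg (by linarith) (Real.sqrt_nonneg _)
    have := hx.2
    nlinarith
  have hsub : S ⊆ Metric.closedBall y (2/3) := fun x hx =>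
    Metric.mem_closedBall.2 (le_of_lt (hdist x hx))
  have hyS : y ∈ S := ⟨le_refl _, by rw [dist_self, sub_zero, ← hP]⟩
  have hScomp : IsCompact S :=
    (isCompact_closedBall y (2/3)).of_isClosed_subset hclosed hsub
  obtain ⟨x, hxS, hmax⟩ := hScomp.exists_isMaxOn ⟨y, hyS⟩ hu_cont.continuousOn
  have hux : P ≤ u x := hxS.1
  have sx_pos : 0 < Real.sqrt (u x) := Real.sqrt_pos.2 (lt_of_lt_of_le hPy hux)
  have hxc : (2/3) * Real.sqrt P ≤ (2/3 - dist x y) * Real.sqrt (u x) := hxS.2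
  refine ⟨x, hdist x hxS, hux, ?_⟩
  intro z hz
  by_contra hcon
  push_neg at hcon
  -- show z ∈ S
  have huz : u z ≥ 4 * u x := le_of_lt hcon
  have hzP : P ≤ u z := by nlinarith
  have hsz : 2 * Real.sqrt (u x) ≤ Real.sqrt (u z) := by
    have h4 : Real.sqrt (4 * u x) ≤ Real.sqrt (u z) := Real.sqrt_le_sqrt huz
    rwa [Real.sqrt_mul (by norm_num : (0:ℝ) ≤ 4),
      show Real.sqrt 4 = 2 by
        rw [show (4:ℝ) = 2 ^ 2 by norm_num, Real.sqrt_sq (by norm_num : (0:ℝ) ≤ 2)]] at h4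
  have hz' : dist z x * Real.sqrt (u x) < (1/3) * Real.sqrt P := by
    rw [div_eq_mul_inv] at hz
    calc dist z x * Real.sqrt (u x)
        < ((1/3) * Real.sqrt P * (Real.sqrt (u x))⁻¹) * Real.sqrt (u x) :=
          mul_lt_mul_of_pos_right hz sx_pos
      _ = (1/3) * Real.sqrt P := by field_simp
  have htri : dist z y ≤ dist z x + dist x y := dist_triangle z x y
  have hzS : z ∈ S := by
    refine ⟨hzP, ?_⟩
    -- (2/3 - dist x y) ≥ (2/3) √P / √(u x) ; dist z x < (1/3) √P / √(u x)
    have h1 : (2/3 - dist z y) * Real.sqrt (u x) ≥ (1/3) * Real.sqrt P := by nlinarith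
    have h2 : 0 ≤ 2/3 - dist z y := by nlinarith
    calc (2/3) * Real.sqrt P = 2 * ((1/3) * Real.sqrt P) := by ring
      _ ≤ 2 * ((2/3 - dist z y) * Real.sqrt (u x)) := by linarith
      _ = (2/3 - dist z y) * (2 * Real.sqrt (u x)) := by ring
      _ ≤ (2/3 - dist z y) * Real.sqrt (u z) := mul_le_mul_of_nonneg_left hsz h2
  have : u z ≤ u x := hmax hzS
  nlinarith

/-- Sequence form of Perelman's point selection: if `u (y i) → ∞`, then for all
sufficiently large `i` we have `u (y i) > 0` and there is `xᵢ` with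
`dist xᵢ yᵢ < 2/3`, `u xᵢ ≥ u yᵢ = Pᵢ`, `u ≤ 4 u xᵢ` on the ball of radius
`Aᵢ (u xᵢ)^(-1/2)` about `xᵢ` where `Aᵢ = (1/3) Pᵢ^(1/2)`; moreover
`Aᵢ (u xᵢ)^(-1/2) ≤ 1/3`, so this ball is contained in the unit ball about `yᵢ`. -/
theorem perelman_point_selection_seq
    {X : Type*} [MetricSpace X] [ProperSpace X]
    (u : X → ℝ) (hu_cont : Continuous u) (hu_nonneg : ∀ x, 0 ≤ u x)
    (y : ℕ → X) (hP : Tendsto (fun i => u (y i)) atTop atTop) :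
    ∀ᶠ i in atTop,
      0 < u (y i) ∧
      ∃ x : X, dist x (y i) < 2/3 ∧
        u (y i) ≤ u x ∧
        (∀ z : X, dist z x < (1/3) * (u (y i)) ^ (1/2 : ℝ) * (u x) ^ (-(1/2 : ℝ)) →
          u z ≤ 4 * u x) ∧
        (1/3) * (u (y i)) ^ (1/2 : ℝ) * (u x) ^ (-(1/2 : ℝ)) ≤ 1/3 ∧
        Metric.ball x ((1/3) * (u (y i)) ^ (1/2 : ℝ) * (u x) ^ (-(1/2 : ℝ)))
          ⊆ Metric.ball (y i) 1 := by
  filter_upwards [hP.eventually_ge_atTop 1] with i hi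
  have hPy : 0 < u (y i) := lt_of_lt_of_le zero_lt_one hi
  refine ⟨hPy, ?_⟩
  obtain ⟨x, hxd, hxu, hxb⟩ := point_select_aux u hu_cont hu_nonneg (y i) hPy
  have hr : (1/3) * (u (y i)) ^ (1/2 : ℝ) * (u x) ^ (-(1/2 : ℝ))
      = (1/3) * Real.sqrt (u (y i)) / Real.sqrt (u x) := by
    rw [Real.rpow_neg (hu_nonneg x), ← Real.sqrt_eq_rpow, ← Real.sqrt_eq_rpow,
      div_eq_mul_inv]
    ring
  have sx_pos : 0 < Real.sqrt (u x) := Real.sqrt_pos.2 (lt_of_lt_of_le hPy hxu)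
  have hrle : (1/3) * Real.sqrt (u (y i)) / Real.sqrt (u x) ≤ 1/3 := by
    rw [div_le_iff₀ sx_pos]
    have := Real.sqrt_le_sqrt hxu
    nlinarith [Real.sqrt_nonneg (u (y i))]
  refine ⟨x, hxd, hxu, ?_, ?_, ?_⟩
  · intro z hz
    rw [hr] at hz
    exact hxb z hz
  · rw [hr]; exact hrle
  · rw [hr]
    intro z hz
    rw [Metric.mem_ball] at *
    calc dist z (y i) ≤ dist z x + dist x (y i) := dist_triangle z x (y i)
      _ < (1/3) * Real.sqrt (u (y i)) / Real.sqrt (u x) + 2/3 := by linarith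
      _ ≤ 1 := by linarith
end
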